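/- Let G be a graph whose vertex set is partitioned into cliques C_1,…,C_m, and suppose playing any vertex in C_j reveals the same observation Z_j. Then the mutual information gained about A* when playing A_t (distributed like A*) satisfies I(A*;(A_t,Y_{A_t})) ≥ Σ_{j=1}^m P(A* ∈ C_j) I(A*; Z_j), i.e., the information gain aggregates at the level of cliques rather than individual arms. -/

import Mathlib

open scoped Classical

noncomputable section

variable {Ω : Type*} [Fintype Ω]

/-- Probability that the random variable `X` takes the value `a`, under the pmf `p`
on the finite sample space `Ω`. -/
def probEq {α : Type*} (p : Ω → ℝ) (X : Ω → α) (a : α) : ℝ :=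
  ∑ ω, if X ω = a then p ω else 0

/-- Expectation of `f` under the pmf `p`. -/
def pmfExp (p : Ω → ℝ) (f : Ω → ℝ) : ℝ := ∑ ω, p ω * f ω

/-- Shannon entropy (in nats) of the distribution of `X` under `p`. -/
def entropyOf {α : Type*} (p : Ω → ℝ) (X : Ω → α) : ℝ :=
  -∑ ω, p ω * Real.log (probEq p X (X ω))

/-- Mutual information `I(X;Y)` under the pmf `p`. -/
def mutualInfo {α β : Type*} (p : Ω → ℝ) (X : Ω → α) (Y : Ω → β) : ℝ :=
  ∑ ω, p ω * Real.log (probEq p (fun ω' => (X ω', Y ω')) (X ω, Y ω) /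
    (probEq p X (X ω) * probEq p Y (Y ω)))

/-- The pmf `p` conditioned on the event `W = c`. -/
def condOn {γ : Type*} (p : Ω → ℝ) (W : Ω → γ) (c : γ) : Ω → ℝ :=
  fun ω => (if W ω = c then p ω else 0) / probEq p W c

/-- Conditional mutual information `I(X;Y ∣ W)` under the pmf `p`. -/
def condMutualInfo {α β γ : Type*} (p : Ω → ℝ) (X : Ω → α) (Y : Ω → β) (W : Ω → γ) : ℝ :=
  ∑ ω, p ω * Real.log
    ((probEq p (fun ω' => (X ω', Y ω', W ω')) (X ω, Y ω, W ω) * probEq p W (W ω)) /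
      (probEq p (fun ω' => (X ω', W ω')) (X ω, W ω) *
        probEq p (fun ω' => (Y ω', W ω')) (Y ω, W ω)))

/-- The history after `t` rounds of the observation process `O`. -/
def history {T : ℕ} {𝒪 : Type*} (O : Fin T → Ω → 𝒪) (t : Fin T) (ω : Ω) :
    Fin T → Option 𝒪 :=
  fun s => if (s : ℕ) < (t : ℕ) then some (O s ω) else none

/-- A map `f : V → Fin m` is a clique covering of `G` if every fiber induces a clique. -/
def IsCliqueCovering {V : Type*} (G : SimpleGraph V) {m : ℕ} (f : V → Fin m) : Prop :=
  ∀ c : Fin m, G.IsClique (f ⁻¹' {c})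

/-!
Since `A_t` is independent of `(A*, Z)`, conditioning on `A_t = a` leaves the joint law of
`(A*, Z)` unchanged, so `I(A*; (A_t, Y_{A_t})) = Σ_a P(A_t = a) I(A*; (a, Z_{[a]}))`.
Pairing an observation with the constant `a` does not change mutual information, and
`A_t` has the law of `A*`, so the sum is `Σ_a P(A* = a) I(A*; Z_{[a]})`; grouping the arms by
clique gives `Σ_j P(A* ∈ C_j) I(A*; Z_j)`, with equality.
-/

section PmfIndependence

variable {α β γ ι : Type*} {p : Ω → ℝ}

def pointwiseMutualInfo (p : Ω → ℝ) (X : Ω → α) (Y : Ω → β) (x : α) (y : β) : ℝ :=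
  Real.log (probEq p (fun ω => (X ω, Y ω)) (x, y) / (probEq p X x * probEq p Y y))

def IndepPmf (p : Ω → ℝ) (X : Ω → α) (Y : Ω → β) : Prop :=
  ∀ x y, probEq p (fun ω => (X ω, Y ω)) (x, y) = probEq p X x * probEq p Y y

lemma mutualInfo_eq_sum_pointwiseMutualInfo (X : Ω → α) (Y : Ω → β) :
    mutualInfo p X Y = ∑ ω, p ω * pointwiseMutualInfo p X Y (X ω) (Y ω) := rfl

lemma probEq_congr {X : Ω → α} {Y : Ω → β} {x : α} {y : β}
    (h : ∀ ω, X ω = x ↔ Y ω = y) : probEq p X x = probEq p Y y :=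
  Finset.sum_congr rfl fun ω _ => by simp only [h]

lemma probEq_comp_injective {X : Ω → α} {g : α → β} (hg : g.Injective) (x : α) :
    probEq p (fun ω => g (X ω)) (g x) = probEq p X x :=
  probEq_congr fun _ => hg.eq_iff

lemma probEq_pos (hp : ∀ ω, 0 ≤ p ω) (X : Ω → α) {ω : Ω} (hω : 0 < p ω) :
    0 < probEq p X (X ω) :=
  hω.trans_le <| by
    simpa [probEq] using Finset.single_le_sum (f := fun ω' => if X ω' = X ω then p ω' else 0)
      (fun ω' _ => by split_ifs <;> simp [hp ω']) (Finset.mem_univ ω)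

lemma sum_mul_comp_eq_sum_probEq (X : Ω → α) (F : α → ℝ) {s : Finset α}
    (hs : ∀ ω, X ω ∈ s) : ∑ ω, p ω * F (X ω) = ∑ x ∈ s, probEq p X x * F x := by
  simp only [probEq, Finset.sum_mul, ite_mul, zero_mul]
  rw [Finset.sum_comm]
  exact Finset.sum_congr rfl fun ω _ => by rw [Finset.sum_ite_eq, if_pos (hs ω)]

lemma sum_mul_comp_eq_sum_univ_probEq [Fintype α] (X : Ω → α) (F : α → ℝ) :
    ∑ ω, p ω * F (X ω) = ∑ x, probEq p X x * F x :=
  sum_mul_comp_eq_sum_probEq X F fun _ => Finset.mem_univ _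

lemma probEq_eq_sum_mul_ite (X : Ω → α) (x : α) :
    probEq p X x = ∑ ω, p ω * if X ω = x then 1 else 0 := by
  simp only [probEq, mul_ite, mul_one, mul_zero]

lemma mutualInfo_comp_injective_right (X : Ω → α) (Y : Ω → β) {g : β → γ}
    (hg : g.Injective) : mutualInfo p X (fun ω => g (Y ω)) = mutualInfo p X Y := by
  refine Finset.sum_congr rfl fun ω _ => ?_
  rw [probEq_comp_injective hg]
  congr 3
  exact probEq_congr fun ω' => by simp only [Prod.mk.injEq, hg.eq_iff]

namespace IndepPmf

lemma sum_mul_eq [Fintype α] {A : Ω → α} {W : Ω → β} (hind : IndepPmf p A W)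
    (h : α → β → ℝ) :
    ∑ ω, p ω * h (A ω) (W ω) = ∑ a, probEq p A a * ∑ ω, p ω * h a (W ω) := by
  rw [sum_mul_comp_eq_sum_probEq (fun ω => (A ω, W ω)) (fun x => h x.1 x.2)
    (s := Finset.univ ×ˢ Finset.univ.image W) fun ω => by simp, Finset.sum_product]
  refine Finset.sum_congr rfl fun a _ => ?_
  rw [sum_mul_comp_eq_sum_probEq W (h a) fun ω => Finset.mem_image_of_mem W (Finset.mem_univ ω),
    Finset.mul_sum]
  exact Finset.sum_congr rfl fun w _ => by rw [hind a w, mul_assoc]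

lemma comp_right [Fintype α] {A : Ω → α} {W : Ω → β} (hind : IndepPmf p A W)
    (φ : β → γ) :
    IndepPmf p A (fun ω => φ (W ω)) := by
  intro a y
  calc probEq p (fun ω => (A ω, φ (W ω))) (a, y)
      = ∑ ω, p ω * ((if A ω = a then 1 else 0) * if φ (W ω) = y then 1 else 0) := by
        simp only [probEq_eq_sum_mul_ite, Prod.mk.injEq, ite_zero_mul_ite_zero, mul_one]
    _ = ∑ a', probEq p A a' *
          ((if a' = a then 1 else 0) * probEq p (fun ω => φ (W ω)) y) := by
        rw [hind.sum_mul_eq fun a' w => (if a' = a then 1 else 0) * if φ w = y then 1 else 0]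
        simp only [probEq_eq_sum_mul_ite (fun ω => φ (W ω)), Finset.mul_sum, mul_left_comm]
    _ = probEq p A a * probEq p (fun ω => φ (W ω)) y := by
        simp

end IndepPmf

theorem mutualInfo_indexed_eq_sum [Fintype ι] (hp : ∀ ω, 0 ≤ p ω) (X : Ω → α) (A : Ω → ι)
    (Y : Ω → ι → β) (hind : IndepPmf p A (fun ω => (X ω, Y ω))) :
    mutualInfo p X (fun ω => (A ω, Y ω (A ω))) =
      ∑ a, probEq p A a * mutualInfo p X (fun ω => Y ω a) := by
  -- The factor `P(A = A ω)` cancels from the log-ratio; it is nonzero on the support of `p`.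
  have hpmi : ∀ ω, 0 < p ω →
      pointwiseMutualInfo p X (fun ω => (A ω, Y ω (A ω))) (X ω) (A ω, Y ω (A ω)) =
        pointwiseMutualInfo p X (fun ω' => Y ω' (A ω)) (X ω) (Y ω (A ω)) := by
    intro ω hω
    have hA := (probEq_pos hp A hω).ne'
    have hjoint : probEq p (fun ω' => (X ω', (A ω', Y ω' (A ω'))))
        (X ω, (A ω, Y ω (A ω))) =
          probEq p A (A ω) * probEq p (fun ω' => (X ω', Y ω' (A ω))) (X ω, Y ω (A ω)) := by
      rw [← hind.comp_right (fun w => (w.1, w.2 (A ω)))]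
      exact probEq_congr fun ω' => by grind
    have hobs : probEq p (fun ω' => (A ω', Y ω' (A ω'))) (A ω, Y ω (A ω)) =
        probEq p A (A ω) * probEq p (fun ω' => Y ω' (A ω)) (Y ω (A ω)) := by
      rw [← hind.comp_right (fun w => w.2 (A ω))]
      exact probEq_congr fun ω' => by grind
    rw [pointwiseMutualInfo, pointwiseMutualInfo, hjoint, hobs, mul_left_comm,
      mul_div_mul_left _ _ hA]
  calc mutualInfo p X (fun ω => (A ω, Y ω (A ω)))
      = ∑ ω, p ω * pointwiseMutualInfo p X (fun ω' => Y ω' (A ω)) (X ω) (Y ω (A ω)) :=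
        (mutualInfo_eq_sum_pointwiseMutualInfo _ _).trans <| Finset.sum_congr rfl fun ω _ => by
          rcases (hp ω).eq_or_lt with hω | hω
          · rw [← hω, zero_mul, zero_mul]
          · exact congrArg (p ω * ·) (hpmi ω hω)
    _ = ∑ a, probEq p A a * mutualInfo p X (fun ω => Y ω a) :=
        hind.sum_mul_eq fun a w => pointwiseMutualInfo p X (fun ω' => Y ω' a) w.1 (w.2 a)

end PmfIndependence

theorem mutualInfo_ge_clique_aggregated_general
    {Ω V 𝒪 : Type*} [Fintype Ω] [Fintype V]
    (m : ℕ) (cls : V → Fin m)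
    (p : Ω → ℝ) (hp : ∀ ω, 0 ≤ p ω)
    (Astar At : Ω → V) (Z : Ω → Fin m → 𝒪)
    (hmatch : ∀ a : V, probEq p At a = probEq p Astar a)
    (hindep : ∀ (a b : V) (z : Fin m → 𝒪),
      probEq p (fun ω => (At ω, Astar ω, Z ω)) (a, b, z) =
        probEq p At a * probEq p (fun ω => (Astar ω, Z ω)) (b, z)) :
    ∑ j : Fin m, probEq p (fun ω => cls (Astar ω)) j *
        mutualInfo p Astar (fun ω => Z ω j) ≤
      mutualInfo p Astar (fun ω => (At ω, (At ω, Z ω (cls (At ω))))) := by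
  have hind : IndepPmf p At (fun ω => (Astar ω, Z ω)) := fun a w => hindep a w.1 w.2
  refine le_of_eq ?_
  calc ∑ j, probEq p (fun ω => cls (Astar ω)) j * mutualInfo p Astar (fun ω => Z ω j)
      = ∑ a, probEq p Astar a * mutualInfo p Astar (fun ω => Z ω (cls a)) :=
        (sum_mul_comp_eq_sum_univ_probEq _ _).symm.trans
          (sum_mul_comp_eq_sum_univ_probEq Astar fun a => mutualInfo p Astar fun ω => Z ω (cls a))
    _ = ∑ a, probEq p At a * mutualInfo p Astar (fun ω => (a, Z ω (cls a))) := by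
        simp only [hmatch, mutualInfo_comp_injective_right _ _ (Prod.mk_right_injective _)]
    _ = mutualInfo p Astar (fun ω => (At ω, (At ω, Z ω (cls (At ω))))) :=
        (mutualInfo_indexed_eq_sum hp Astar At (fun ω a => (a, Z ω (cls a)))
          (hind.comp_right fun w => (w.1, fun a => (a, w.2 (cls a))))).symm

/-- Clique-aggregated information gain: if the vertex set of `G` is partitioned into `m`
cliques (by `cls`) and playing any vertex of clique `j` reveals the same observation
`Z_j`, with `A_t` identically distributed with `A*` and independent of `(A*, Z)`, then
`I(A*; (A_t, Y_{A_t})) ≥ Σ_j P(A* ∈ C_j) · I(A*; Z_j)`. -/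
theorem mutualInfo_ge_clique_aggregated
    {Ω V 𝒪 : Type*} [Fintype Ω] [Fintype V] (G : SimpleGraph V)
    (m : ℕ) (cls : V → Fin m) (hcls : IsCliqueCovering G cls)
    (p : Ω → ℝ) (hp : ∀ ω, 0 ≤ p ω) (hpsum : ∑ ω, p ω = 1)
    (Astar At : Ω → V) (Z : Ω → Fin m → 𝒪)
    (hmatch : ∀ a : V, probEq p At a = probEq p Astar a)
    (hindep : ∀ (a b : V) (z : Fin m → 𝒪),
      probEq p (fun ω => (At ω, Astar ω, Z ω)) (a, b, z) =
        probEq p At a * probEq p (fun ω => (Astar ω, Z ω)) (b, z)) :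
    ∑ j : Fin m, probEq p (fun ω => cls (Astar ω)) j *
        mutualInfo p Astar (fun ω => Z ω j) ≤
      mutualInfo p Astar (fun ω => (At ω, (At ω, Z ω (cls (At ω))))) :=
  mutualInfo_ge_clique_aggregated_general m cls p hp Astar At Z hmatch hindep
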